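/- Let M be a filtered differential abelian group with spectral sequence E^{p,q}_r, and for each l let E(l)^{p,q}_r be the spectral sequence of the quotient M/F^lM. Fix integers a, b, k. Then the differentials d_r : E^{a,b}_r → E^{a+r,b-r+1}_r vanish for all r ≥ k if and only if for every l the differentials d_r : E(l)^{a,b}_r → E(l)^{a+r,b-r+1}_r vanish for all r ≥ k. -/

import Mathlib

/-!
Write `π : M → M/F^lM`. Since `π` commutes with `d`, it maps cycles `Z_r` and boundaries `B_r`
of `M` into those of `M/F^lM`; conversely, once `l` exceeds every filtration index occurring in
`Z^{a,b}_r` and `B^{a+r,b-r+1}_r`, every cycle or boundary of `M/F^lM` lifts along `π`.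
If `l ≤ a + r`, then `d_r` vanishes on `E(l)^{a,b}_r` for the trivial reason that
`F^{a+r}(M/F^lM) = 0`; otherwise lift, apply `d_r = 0` in `M`, and push down.
For the converse take `l = a + 2r + 1`: then `dx ≡ β mod F^lM` for some `β ∈ B_r` of `M`, and the
error `dx - β` lies in `Z^{a+r+1,b-r}_{r-1} ⊆ B^{a+r,b-r+1}_r`.
-/

/-- Bigraded cycles `Z^{p,q}_r = {x ∈ F^pM ∩ M^{p+q} ∣ dx ∈ F^{p+r}M}`. -/
def specZ2 {M : Type*} [AddCommGroup M] (d : M →+ M) (F G : ℤ → AddSubgroup M)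
    (p q r : ℤ) : AddSubgroup M :=
  F p ⊓ G (p + q) ⊓ (F (p + r)).comap d

/-- Bigraded boundaries `B^{p,q}_r = Z^{p+1,q-1}_{r-1} + d Z^{p-r+1,q+r-2}_{r-1}`. -/
def specB2 {M : Type*} [AddCommGroup M] (d : M →+ M) (F G : ℤ → AddSubgroup M)
    (p q r : ℤ) : AddSubgroup M :=
  specZ2 d F G (p + 1) (q - 1) (r - 1) ⊔
    (specZ2 d F G (p - r + 1) (q + r - 2) (r - 1)).map d

/-- Induced filtration (and grading) on the quotient `M/F^lM`. -/
def quotF2 {M : Type*} [AddCommGroup M] (F : ℤ → AddSubgroup M) (l p : ℤ) :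
    AddSubgroup (M ⧸ F l) :=
  (F p).map (QuotientAddGroup.mk' (F l))

/-- Induced differential on the quotient `M/F^lM`. -/
def quotD2 {M : Type*} [AddCommGroup M] (d : M →+ M) (F : ℤ → AddSubgroup M) (l : ℤ)
    (hdF : ∀ p, ∀ x ∈ F p, d x ∈ F p) : (M ⧸ F l) →+ (M ⧸ F l) :=
  QuotientAddGroup.map (F l) (F l) d (fun x hx => hdF l x hx)

open QuotientAddGroup

abbrev quotG2 {M : Type*} [AddCommGroup M] (F G : ℤ → AddSubgroup M) (l : ℤ) :
    ℤ → AddSubgroup (M ⧸ F l) :=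
  fun n => (G n).map (mk' (F l))

/-- `d_r : E^{a,b}_r → E^{a+r,b-r+1}_r` vanishes, read on representatives. -/
def DifferentialVanishes {M : Type*} [AddCommGroup M] (d : M →+ M) (F G : ℤ → AddSubgroup M)
    (a b r : ℤ) : Prop :=
  ∀ x ∈ specZ2 d F G a b r, d x ∈ specB2 d F G (a + r) (b - r + 1) r

section

variable {M : Type*} [AddCommGroup M] {d : M →+ M} {F G : ℤ → AddSubgroup M}

lemma mem_specZ2 {p q r : ℤ} {x : M} :
    x ∈ specZ2 d F G p q r ↔ x ∈ F p ∧ x ∈ G (p + q) ∧ d x ∈ F (p + r) := by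
  simp only [specZ2, AddSubgroup.mem_inf, AddSubgroup.mem_comap, and_assoc]

lemma specZ2_le_specB2 (p q r : ℤ) :
    specZ2 d F G (p + 1) (q - 1) (r - 1) ≤ specB2 d F G p q r :=
  le_sup_left

lemma specB2_le (hd : ∀ x, d (d x) = 0) (hdG : ∀ n, ∀ x ∈ G n, d x ∈ G (n + 1)) (p q r : ℤ) :
    specB2 d F G p q r ≤ G (p + q) ⊓ (F (p + r)).comap d := by
  refine sup_le (fun z hz => ?_) ?_
  · obtain ⟨-, hzG, hdz⟩ := mem_specZ2.1 hz
    rw [show p + 1 + (q - 1) = p + q by ring] at hzG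
    rw [show p + 1 + (r - 1) = p + r by ring] at hdz
    exact ⟨hzG, hdz⟩
  · rintro _ ⟨w, hw, rfl⟩
    obtain ⟨-, hwG, -⟩ := mem_specZ2.1 hw
    have hdwG := hdG _ w hwG
    rw [show p - r + 1 + (q + r - 2) + 1 = p + q by ring] at hdwG
    exact ⟨hdwG, AddSubgroup.mem_comap.2 (by rw [hd]; exact zero_mem _)⟩

lemma mem_specB2_of_sub_mem (hd : ∀ x, d (d x) = 0) (hdG : ∀ n, ∀ x ∈ G n, d x ∈ G (n + 1))
    {p q r : ℤ} {y β : M} (hy : y ∈ G (p + q)) (hdy : d y ∈ F (p + r))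
    (hβ : β ∈ specB2 d F G p q r) (hyβ : y - β ∈ F (p + 1)) : y ∈ specB2 d F G p q r := by
  obtain ⟨hβG, hdβ⟩ := specB2_le hd hdG p q r hβ
  have herr : y - β ∈ specZ2 d F G (p + 1) (q - 1) (r - 1) := by
    refine mem_specZ2.2 ⟨hyβ, ?_, ?_⟩
    · rw [show p + 1 + (q - 1) = p + q by ring]
      exact sub_mem hy hβG
    · rw [show p + 1 + (r - 1) = p + r by ring, map_sub]
      exact sub_mem hdy hdβ
  simpa using add_mem (specZ2_le_specB2 p q r herr) hβ

lemma quotF2_eq_bot (hF : Antitone F) {l p : ℤ} (h : l ≤ p) : quotF2 F l p = ⊥ := by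
  rw [quotF2, AddSubgroup.map_eq_bot_iff, ker_mk']
  exact hF h

variable (hdF : ∀ p, ∀ x ∈ F p, d x ∈ F p)
include hdF

lemma quotD2_mk (l : ℤ) (x : M) : quotD2 d F l hdF (mk' (F l) x) = mk' (F l) (d x) :=
  rfl

lemma quotD2_comp_mk' (l : ℤ) : (quotD2 d F l hdF).comp (mk' (F l)) = (mk' (F l)).comp d :=
  rfl

lemma map_specZ2_le (l p q r : ℤ) :
    (specZ2 d F G p q r).map (mk' (F l)) ≤
      specZ2 (quotD2 d F l hdF) (quotF2 F l) (quotG2 F G l) p q r := by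
  rintro _ ⟨x, hx, rfl⟩
  obtain ⟨hxF, hxG, hdx⟩ := mem_specZ2.1 hx
  exact mem_specZ2.2 ⟨⟨x, hxF, rfl⟩, ⟨x, hxG, rfl⟩, ⟨d x, hdx, rfl⟩⟩

lemma map_specB2_le (l p q r : ℤ) :
    (specB2 d F G p q r).map (mk' (F l)) ≤
      specB2 (quotD2 d F l hdF) (quotF2 F l) (quotG2 F G l) p q r := by
  rw [specB2, specB2, AddSubgroup.map_sup, AddSubgroup.map_map, ← quotD2_comp_mk' hdF,
    ← AddSubgroup.map_map]
  exact sup_le_sup (map_specZ2_le hdF l _ _ _) (AddSubgroup.map_mono (map_specZ2_le hdF l _ _ _))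

lemma specZ2_quot_le_map (hF : Antitone F) {l p q r : ℤ} (hp : p ≤ l) (hpr : p + r ≤ l) :
    specZ2 (quotD2 d F l hdF) (quotF2 F l) (quotG2 F G l) p q r ≤
      (specZ2 d F G p q r).map (mk' (F l)) := by
  intro y hy
  obtain ⟨⟨x, hx, rfl⟩, ⟨g, hg, hgx⟩, ⟨u, hu, hdu⟩⟩ := mem_specZ2.1 hy
  rw [← hgx, quotD2_mk] at hdu
  refine ⟨g, mem_specZ2.2 ⟨?_, hg, ?_⟩, hgx⟩
  · simpa using add_mem (hF hp (eq_iff_sub_mem.1 hgx)) hx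
  · simpa using add_mem (hF hpr (eq_iff_sub_mem.1 hdu.symm)) hu

lemma specB2_quot_le_map (hF : Antitone F) {l p q r : ℤ} (h₁ : p + 1 ≤ l) (h₂ : p + r ≤ l)
    (h₃ : p - r + 1 ≤ l) :
    specB2 (quotD2 d F l hdF) (quotF2 F l) (quotG2 F G l) p q r ≤
      (specB2 d F G p q r).map (mk' (F l)) := by
  rw [specB2, specB2, AddSubgroup.map_sup, AddSubgroup.map_map, ← quotD2_comp_mk' hdF,
    ← AddSubgroup.map_map]
  exact sup_le_sup (specZ2_quot_le_map hdF hF h₁ (by omega))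
    (AddSubgroup.map_mono (specZ2_quot_le_map hdF hF h₃ (by omega)))

lemma DifferentialVanishes.quotient (hF : Antitone F) {a b r : ℤ} (hr : 0 ≤ r)
    (h : DifferentialVanishes d F G a b r) (l : ℤ) :
    DifferentialVanishes (quotD2 d F l hdF) (quotF2 F l) (quotG2 F G l) a b r := by
  intro y hy
  rcases le_or_gt l (a + r) with hl | hl
  · have hdy := (mem_specZ2.1 hy).2.2
    rw [quotF2_eq_bot hF hl, AddSubgroup.mem_bot] at hdy
    rw [hdy]
    exact zero_mem _
  · obtain ⟨x, hx, rfl⟩ := specZ2_quot_le_map hdF hF (by omega) hl.le hy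
    exact map_specB2_le hdF l _ _ _ ⟨d x, h x hx, rfl⟩

lemma DifferentialVanishes.of_quotient (hd : ∀ x, d (d x) = 0)
    (hdG : ∀ n, ∀ x ∈ G n, d x ∈ G (n + 1)) (hF : Antitone F) {a b r : ℤ} (hr : 0 ≤ r)
    (h : DifferentialVanishes (quotD2 d F (a + 2 * r + 1) hdF) (quotF2 F (a + 2 * r + 1))
      (quotG2 F G (a + 2 * r + 1)) a b r) :
    DifferentialVanishes d F G a b r := by
  intro x hx
  obtain ⟨β, hβ, hβx⟩ := specB2_quot_le_map hdF hF (by omega) (by omega) (by omega)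
    (h _ (map_specZ2_le hdF _ a b r ⟨x, hx, rfl⟩))
  rw [quotD2_mk] at hβx
  have hdxG := hdG _ x (mem_specZ2.1 hx).2.1
  rw [show a + b + 1 = a + r + (b - r + 1) by ring] at hdxG
  refine mem_specB2_of_sub_mem hd hdG hdxG (by rw [hd]; exact zero_mem _) hβ ?_
  exact hF (by omega) (eq_iff_sub_mem.1 hβx.symm)

end

theorem stmt_2_general {M : Type*} [AddCommGroup M] (d : M →+ M) (hd : ∀ x, d (d x) = 0)
    (F G : ℤ → AddSubgroup M) (hF : ∀ p q : ℤ, p ≤ q → F q ≤ F p)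
    (hdF : ∀ p, ∀ x ∈ F p, d x ∈ F p)
    (hdG : ∀ n, ∀ x ∈ G n, d x ∈ G (n + 1))
    (a b k : ℤ) (hk : 0 ≤ k) :
    (∀ r : ℤ, k ≤ r → ∀ x ∈ specZ2 d F G a b r,
        d x ∈ specB2 d F G (a + r) (b - r + 1) r) ↔
    (∀ l : ℤ, ∀ r : ℤ, k ≤ r →
        ∀ y ∈ specZ2 (quotD2 d F l hdF) (quotF2 F l)
            (fun n => (G n).map (QuotientAddGroup.mk' (F l))) a b r,
          quotD2 d F l hdF y ∈ specB2 (quotD2 d F l hdF) (quotF2 F l)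
            (fun n => (G n).map (QuotientAddGroup.mk' (F l))) (a + r) (b - r + 1) r) := by
  have hF' : Antitone F := fun p q h => hF p q h
  exact ⟨fun h l r hr => DifferentialVanishes.quotient hdF hF' (hk.trans hr) (h r hr) l,
    fun h r hr => DifferentialVanishes.of_quotient hdF hd hdG hF' (hk.trans hr) (h _ r hr)⟩

/-- The spectral sequence of `M` degenerates at `E^{a,b}_k`
(`d_r = 0` on `E^{a,b}_r` for all `r ≥ k`) iff for every `l` the spectral sequence of
the quotient filtered complex `M/F^lM` degenerates at `E(l)^{a,b}_k`. -/
theorem stmt_2 {M : Type*} [AddCommGroup M] (d : M →+ M) (hd : ∀ x, d (d x) = 0)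
    (F G : ℤ → AddSubgroup M) (hF : ∀ p q : ℤ, p ≤ q → F q ≤ F p)
    (hdF : ∀ p, ∀ x ∈ F p, d x ∈ F p)
    (hdG : ∀ n, ∀ x ∈ G n, d x ∈ G (n + 1))
    -- `M = ⊕ₙ Mⁿ` and each `F^pM` is a graded subgroup:
    (hGsup : ⨆ n, G n = ⊤) (hGind : iSupIndep G)
    (hFgr : ∀ p, F p = ⨆ n, (F p ⊓ G n))
    (a b k : ℤ) (hk : 0 ≤ k) :
    (∀ r : ℤ, k ≤ r → ∀ x ∈ specZ2 d F G a b r,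
        d x ∈ specB2 d F G (a + r) (b - r + 1) r) ↔
    (∀ l : ℤ, ∀ r : ℤ, k ≤ r →
        ∀ y ∈ specZ2 (quotD2 d F l hdF) (quotF2 F l)
            (fun n => (G n).map (QuotientAddGroup.mk' (F l))) a b r,
          quotD2 d F l hdF y ∈ specB2 (quotD2 d F l hdF) (quotF2 F l)
            (fun n => (G n).map (QuotientAddGroup.mk' (F l))) (a + r) (b - r + 1) r) :=
  stmt_2_general d hd F G hF hdF hdG a b k hk
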